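/- Let u, v : ℝ² → ℝ be C¹ on a neighborhood of (t₀,x₀) with u(t₀,x₀) ≠ 0 and u differentiable enough that u_x exists, and suppose they satisfy the potential system v_x = u, v_t = u_x / u there. Set y₀ = v(t₀,x₀), and suppose ũ, ṽ are C¹ functions on a neighborhood of (t₀,y₀) satisfying ṽ(t, v(t,x)) = x and ũ(t, v(t,x)) = 1/u(t,x) for all (t,x) in a neighborhood of (t₀,x₀). Then at (t₀,y₀) the transformed functions satisfy the same potential system: ∂ṽ/∂y = ũ and ∂ṽ/∂t = (∂ũ/∂y)/ũ. (This is the potential hodograph transformation t̃ = t, x̃ = v, ũ = u⁻¹, ṽ = x, a discrete symmetry of the potential system of the fast diffusion equation.) -/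

import Mathlib

/-- Partial derivative with respect to the first variable (time). -/
noncomputable def pt (u : ℝ × ℝ → ℝ) (p : ℝ × ℝ) : ℝ :=
  deriv (fun s => u (s, p.2)) p.1

/-- Partial derivative with respect to the second variable (space). -/
noncomputable def px (u : ℝ × ℝ → ℝ) (p : ℝ × ℝ) : ℝ :=
  deriv (fun y => u (p.1, y)) p.2

/-!
Differentiating the hodograph identities `ṽ(t, v(t,x)) = x` and `ũ(t, v(t,x)) = 1/u(t,x)` in `x`
and in `t` by the chain rule, and inserting `v_x = u`, `v_t = u_x / u`, gives at the base point
`u ṽ_y = 1`, `ṽ_t + (u_x / u) ṽ_y = 0` and `u ũ_y = -u_x / u²`. Solving this triangular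
system gives `ṽ_y = 1/u = ũ` and `ṽ_t = -u_x / u² = ũ_y / ũ`.
-/

open Filter Topology

section PartialDerivatives

variable {f g φ : ℝ × ℝ → ℝ}

theorem pt_eq_fderiv {p : ℝ × ℝ} (hf : DifferentiableAt ℝ f p) :
    pt f p = fderiv ℝ f p (1, 0) :=
  (hf.hasFDerivAt.comp_hasDerivAt p.1 ((hasDerivAt_id p.1).prodMk (hasDerivAt_const _ p.2))).deriv

theorem px_eq_fderiv {p : ℝ × ℝ} (hf : DifferentiableAt ℝ f p) :
    px f p = fderiv ℝ f p (0, 1) :=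
  (hf.hasFDerivAt.comp_hasDerivAt p.2 ((hasDerivAt_const _ p.1).prodMk (hasDerivAt_id p.2))).deriv

theorem hasDerivAt_comp_prodMk_const_left {t a d : ℝ} {h : ℝ → ℝ}
    (hf : DifferentiableAt ℝ f (t, h a)) (hh : HasDerivAt h d a) :
    HasDerivAt (fun y => f (t, h y)) (d * px f (t, h a)) a := by
  refine (hf.hasFDerivAt.comp_hasDerivAt a ((hasDerivAt_const a t).prodMk hh)).congr_deriv ?_
  rw [px_eq_fderiv hf, ← smul_eq_mul, ← map_smul]
  simp

theorem hasDerivAt_comp_prodMk_id_left {a d : ℝ} {h : ℝ → ℝ}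
    (hf : DifferentiableAt ℝ f (a, h a)) (hh : HasDerivAt h d a) :
    HasDerivAt (fun s => f (s, h s)) (pt f (a, h a) + d * px f (a, h a)) a := by
  refine (hf.hasFDerivAt.comp_hasDerivAt a ((hasDerivAt_id a).prodMk hh)).congr_deriv ?_
  have hsplit : ((1 : ℝ), d) = ((1 : ℝ), (0 : ℝ)) + d • ((0 : ℝ), (1 : ℝ)) := by simp
  rw [pt_eq_fderiv hf, px_eq_fderiv hf, hsplit, map_add, map_smul, smul_eq_mul]

theorem hasDerivAt_px {p : ℝ × ℝ} (hf : DifferentiableAt ℝ f p) :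
    HasDerivAt (fun y => f (p.1, y)) (px f p) p.2 := by
  simpa using hasDerivAt_comp_prodMk_const_left hf (hasDerivAt_id p.2)

theorem hasDerivAt_pt {p : ℝ × ℝ} (hf : DifferentiableAt ℝ f p) :
    HasDerivAt (fun s => f (s, p.2)) (pt f p) p.1 := by
  simpa using hasDerivAt_comp_prodMk_id_left hf (hasDerivAt_const p.1 p.2)

theorem px_mul_px_eq_of_eventually_eq {p : ℝ × ℝ} {d : ℝ}
    (hf : DifferentiableAt ℝ f (p.1, g p)) (hg : DifferentiableAt ℝ g p)
    (h : ∀ᶠ q in 𝓝 p, f (q.1, g q) = φ q) (hφ : HasDerivAt (fun y => φ (p.1, y)) d p.2) :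
    px g p * px f (p.1, g p) = d := by
  have hline : ∀ᶠ y in 𝓝 p.2, f (p.1, g (p.1, y)) = φ (p.1, y) :=
    ((Continuous.prodMk_right p.1).tendsto p.2).eventually h
  exact (hasDerivAt_comp_prodMk_const_left hf (hasDerivAt_px hg)).unique
    (hφ.congr_of_eventuallyEq hline)

theorem pt_add_pt_mul_px_eq_of_eventually_eq {p : ℝ × ℝ} {d : ℝ}
    (hf : DifferentiableAt ℝ f (p.1, g p)) (hg : DifferentiableAt ℝ g p)
    (h : ∀ᶠ q in 𝓝 p, f (q.1, g q) = φ q) (hφ : HasDerivAt (fun s => φ (s, p.2)) d p.1) :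
    pt f (p.1, g p) + pt g p * px f (p.1, g p) = d := by
  have hline : ∀ᶠ s in 𝓝 p.1, f (s, g (s, p.2)) = φ (s, p.2) :=
    ((Continuous.prodMk_left p.2).tendsto p.1).eventually h
  exact (hasDerivAt_comp_prodMk_id_left hf (hasDerivAt_pt hg)).unique
    (hφ.congr_of_eventuallyEq hline)

end PartialDerivatives

theorem hodograph_partials_of_chain_rule {c e X T U : ℝ} (hc : c ≠ 0) (hX : c * X = 1)
    (hT : T + e / c * X = 0) (hU : c * U = -e / c ^ 2) : X = 1 / c ∧ T = U / (1 / c) := by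
  have hX' : X = 1 / c := by
    field_simp
    linear_combination hX
  have hU' : U = -e / c ^ 3 := by
    field_simp at hU ⊢
    linear_combination hU
  refine ⟨hX', ?_⟩
  rw [hX'] at hT
  rw [hU']
  field_simp at hT ⊢
  linear_combination hT

theorem potential_hodograph_fast_diffusion
    (u v : ℝ × ℝ → ℝ) (t₀ x₀ : ℝ)
    (hv : ContDiffAt ℝ 1 v (t₀, x₀))
    (hu0 : u (t₀, x₀) ≠ 0)
    (hux : ∀ᶠ p in nhds (t₀, x₀), DifferentiableAt ℝ (fun y => u (p.1, y)) p.2)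
    (hsys : ∀ᶠ p in nhds (t₀, x₀), px v p = u p ∧ pt v p = px u p / u p)
    (y₀ : ℝ) (hy₀ : y₀ = v (t₀, x₀))
    (uu vv : ℝ × ℝ → ℝ)
    (huu : ContDiffAt ℝ 1 uu (t₀, y₀)) (hvv : ContDiffAt ℝ 1 vv (t₀, y₀))
    (htr : ∀ᶠ p in nhds (t₀, x₀), vv (p.1, v p) = p.2 ∧ uu (p.1, v p) = 1 / u p) :
    px vv (t₀, y₀) = uu (t₀, y₀) ∧
      pt vv (t₀, y₀) = px uu (t₀, y₀) / uu (t₀, y₀) := by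
  subst hy₀
  obtain ⟨hvx, hvt⟩ := hsys.self_of_nhds
  have huu0 : uu (t₀, v (t₀, x₀)) = 1 / u (t₀, x₀) := htr.self_of_nhds.2
  have hvd := hv.differentiableAt one_ne_zero
  have hvvd := hvv.differentiableAt one_ne_zero
  have huud := huu.differentiableAt one_ne_zero
  have hinv : HasDerivAt (fun y => 1 / u (t₀, y)) (-px u (t₀, x₀) / u (t₀, x₀) ^ 2) x₀ := by
    simpa only [one_div, px] using hux.self_of_nhds.hasDerivAt.fun_inv hu0
  have hx : px v (t₀, x₀) * px vv (t₀, v (t₀, x₀)) = 1 :=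
    px_mul_px_eq_of_eventually_eq hvvd hvd (htr.mono fun _ h => h.1) (hasDerivAt_id x₀)
  have ht : pt vv (t₀, v (t₀, x₀)) + pt v (t₀, x₀) * px vv (t₀, v (t₀, x₀)) = 0 :=
    pt_add_pt_mul_px_eq_of_eventually_eq hvvd hvd (htr.mono fun _ h => h.1)
      (hasDerivAt_const t₀ x₀)
  have hU : px v (t₀, x₀) * px uu (t₀, v (t₀, x₀)) = -px u (t₀, x₀) / u (t₀, x₀) ^ 2 :=
    px_mul_px_eq_of_eventually_eq huud hvd (htr.mono fun _ h => h.2) hinv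
  rw [hvx] at hx hU
  rw [hvt] at ht
  obtain ⟨hvvx, hvvt⟩ := hodograph_partials_of_chain_rule hu0 hx ht hU
  exact ⟨hvvx.trans huu0.symm, huu0 ▸ hvvt⟩
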